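/- Under any stable matching algorithm, a firm whose capacity is strictly greater than its peak cannot change the set of workers it is matched with by misreporting any permutation of its acceptable workers: for any permuted preference list ≻'_f over the same set of acceptable workers, firm f is matched to the same set of workers in every stable matching of the manipulated instance as in every stable matching of the true instance. -/
import Mathlib


/-- A many-to-one matching instance: firms `F` with capacities, workers `W`,
strict preferences of workers over `Option F` (`none` = unmatched), strict
preferences of firms over individual workers (`Option W`, `none` = keeping a
seat empty) together with a responsive extension to sets of workers. -/
structure MTO (F W : Type) [DecidableEq W] where
  cap : F → ℕ
  /-- `wlt w a b` : worker `w` strictly prefers `a` to `b`. -/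
  wlt : W → Option F → Option F → Prop
  wlt_trans : ∀ w a b c, wlt w a b → wlt w b c → wlt w a c
  wlt_irrefl : ∀ w a, ¬ wlt w a a
  wlt_trichot : ∀ w a b, a = b ∨ wlt w a b ∨ wlt w b a
  /-- `flt1 f a b` : firm `f` strictly prefers (single) worker option `a` to `b`. -/
  flt1 : F → Option W → Option W → Prop
  flt1_trans : ∀ f a b c, flt1 f a b → flt1 f b c → flt1 f a c
  flt1_irrefl : ∀ f a, ¬ flt1 f a a
  flt1_trichot : ∀ f a b, a = b ∨ flt1 f a b ∨ flt1 f b a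
  /-- `flt f S T` : firm `f` strictly prefers the set `S` to the set `T`
  (responsive extension of `flt1`). -/
  flt : F → Finset W → Finset W → Prop
  flt_trans : ∀ f S T U, flt f S T → flt f T U → flt f S U
  flt_irrefl : ∀ f S, ¬ flt f S S
  resp_add : ∀ f (S : Finset W) (w : W), w ∉ S →
    (flt f (insert w S) S ↔ flt1 f (some w) none)
  resp_swap : ∀ f (S : Finset W) (w w' : W), w ∉ S → w' ∉ S → w ≠ w' →
    (flt f (insert w S) (insert w' S) ↔ flt1 f (some w) (some w'))

variable {F W : Type} [DecidableEq W] [DecidableEq F] [Fintype W]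

/-- The set of workers matched to firm `f` under the matching `μ`. -/
def matchedSet (μ : W → Option F) (f : F) : Finset W :=
  Finset.univ.filter (fun w => μ w = some f)

/-- `μ` respects all capacity constraints. -/
def MTO.isMatching (I : MTO F W) (μ : W → Option F) : Prop :=
  ∀ f, (matchedSet μ f).card ≤ I.cap f

/-- No agent is matched to an unacceptable partner. -/
def MTO.indivRational (I : MTO F W) (μ : W → Option F) : Prop :=
  (∀ w f, μ w = some f → ¬ I.wlt w none (some f)) ∧
  (∀ w f, μ w = some f → ¬ I.flt1 f none (some w))

/-- The worker-firm pair `(w, f)` blocks `μ`. -/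
def MTO.blocks (I : MTO F W) (μ : W → Option F) (w : W) (f : F) : Prop :=
  I.wlt w (some f) (μ w) ∧
  ∃ S ⊆ matchedSet μ f, (insert w S).card ≤ I.cap f ∧
    I.flt f (insert w S) (matchedSet μ f)

/-- Stability: a feasible, individually rational matching with no blocking pair. -/
def MTO.isStable (I : MTO F W) (μ : W → Option F) : Prop :=
  I.isMatching μ ∧ I.indivRational μ ∧ ∀ w f, ¬ I.blocks μ w f

/-- `μ` is the worker-optimal stable matching (output of WPDA). -/
def MTO.workerOptimal (I : MTO F W) (μ : W → Option F) : Prop :=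
  I.isStable μ ∧ ∀ μ', I.isStable μ' → ∀ w, μ' w = μ w ∨ I.wlt w (μ w) (μ' w)

/-- `μ` is the firm-optimal stable matching (output of FPDA). -/
def MTO.firmOptimal (I : MTO F W) (μ : W → Option F) : Prop :=
  I.isStable μ ∧ ∀ μ', I.isStable μ' → ∀ f,
    matchedSet μ' f = matchedSet μ f ∨ I.flt f (matchedSet μ f) (matchedSet μ' f)

/-- The instance obtained from `I` by setting the capacity of firm `f` to `b`. -/
def MTO.withCap (I : MTO F W) (f : F) (b : ℕ) : MTO F W :=
  { I with cap := Function.update I.cap f b }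

/-- The peak of firm `f`: the largest number of workers matched to `f` in any
stable matching for any choice of `f`'s capacity. -/
noncomputable def MTO.peak (I : MTO F W) (f : F) : ℕ :=
  sSup {n | ∃ b μ, (I.withCap f b).isStable μ ∧ (matchedSet μ f).card = n}

/-- `w` proposes to `f` at some point of WPDA, where `μ` is the worker-optimal
stable matching (i.e. the WPDA outcome): `w` finds `f` acceptable and `f` is
weakly preferred by `w` to its final WPDA match. -/
def MTO.proposesTo (I : MTO F W) (μ : W → Option F) (w : W) (f : F) : Prop :=
  I.wlt w (some f) none ∧ (μ w = some f ∨ I.wlt w (some f) (μ w))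

/-- All workers in `S` are acceptable to `f`. -/
def MTO.acceptableSet (I : MTO F W) (f : F) (S : Finset W) : Prop :=
  ∀ w ∈ S, ¬ I.flt1 f none (some w)

/-- Strongly monotone preferences: any larger acceptable set is strictly
preferred to any smaller acceptable set. -/
def MTO.stronglyMonotone (I : MTO F W) (f : F) : Prop :=
  ∀ S T : Finset W, I.acceptableSet f S → I.acceptableSet f T →
    T.card < S.card → I.flt f S T

section Auxiliary

variable {F W : Type} [DecidableEq W] [DecidableEq F] [Fintype W]

lemma mem_matchedSet {μ : W → Option F} {f : F} {w : W} :
    w ∈ matchedSet μ f ↔ μ w = some f := by simp [matchedSet]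

lemma MTO.flt1_asymm (I : MTO F W) (f : F) {a b : Option W} (h : I.flt1 f a b) :
    ¬ I.flt1 f b a := fun h' => I.flt1_irrefl f a (I.flt1_trans f a b a h h')

lemma MTO.flt1_total (I : MTO F W) (f : F) {a b : Option W} (h : a ≠ b) :
    I.flt1 f a b ∨ I.flt1 f b a := by
  rcases I.flt1_trichot f a b with h'|h'|h' <;> tauto

lemma MTO.wlt_asymm (I : MTO F W) (w : W) {a b : Option F} (h : I.wlt w a b) :
    ¬ I.wlt w b a := fun h' => I.wlt_irrefl w a (I.wlt_trans w a b a h h')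

lemma acc_of_not_unacc (I : MTO F W) (f : F) (w : W) (h : ¬ I.flt1 f none (some w)) :
    I.flt1 f (some w) none :=
  (I.flt1_total f (by simp)).resolve_right h

lemma stable_matched_acc {I : MTO F W} {μ : W → Option F} (h : I.isStable μ) {g : F} {w : W}
    (hw : μ w = some g) : I.flt1 g (some w) none :=
  acc_of_not_unacc I g w (h.2.1.2 w g hw)

lemma not_mem_matched_of_wlt {I : MTO F W} {μ : W → Option F} {w : W} {g : F}
    (h1 : I.wlt w (some g) (μ w)) : w ∉ matchedSet μ g := by
  intro hmem
  rw [mem_matchedSet] at hmem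
  rw [hmem] at h1
  exact I.wlt_irrefl w (some g) h1

/-- S1: no "open slot" block. -/
lemma stable_no_open_block {I : MTO F W} {μ : W → Option F} (h : I.isStable μ) {w : W} {g : F}
    (h1 : I.wlt w (some g) (μ w)) (h2 : I.flt1 g (some w) none)
    (h3 : (matchedSet μ g).card < I.cap g) : False := by
  have hwS : w ∉ matchedSet μ g := not_mem_matched_of_wlt h1
  exact h.2.2 w g ⟨h1, matchedSet μ g, subset_rfl,
    by rw [Finset.card_insert_of_notMem hwS]; omega,
    (I.resp_add g _ w hwS).2 h2⟩

/-- S2: no "swap" block. -/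
lemma stable_no_swap_block {I : MTO F W} {μ : W → Option F} (h : I.isStable μ) {w u : W} {g : F}
    (h1 : I.wlt w (some g) (μ w)) (hu : u ∈ matchedSet μ g)
    (h2 : I.flt1 g (some w) (some u)) : False := by
  have hwM : w ∉ matchedSet μ g := not_mem_matched_of_wlt h1
  set S := (matchedSet μ g).erase u with hS
  have hwS : w ∉ S := fun hw => hwM (Finset.mem_of_mem_erase hw)
  have huS : u ∉ S := Finset.notMem_erase u _
  have hwu : w ≠ u := fun e => hwM (e ▸ hu)
  have hins : insert u S = matchedSet μ g := Finset.insert_erase hu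
  have hpos : 1 ≤ (matchedSet μ g).card := Finset.card_pos.mpr ⟨u, hu⟩
  have hle : (matchedSet μ g).card ≤ I.cap g := h.1 g
  apply h.2.2 w g
  refine ⟨h1, S, Finset.erase_subset _ _, ?_, ?_⟩
  · rw [Finset.card_insert_of_notMem hwS, hS, Finset.card_erase_of_mem hu]; omega
  · have := (I.resp_swap g S w u hwS huS hwu).2 h2
    rwa [hins] at this

/-- Chain lemma: a set of acceptable workers is preferred to any proper subset. -/
lemma chain_flt (I : MTO F W) (g : F) :
    ∀ n (T S : Finset W), T.card ≤ n → S ⊆ T → (∀ u ∈ T, I.flt1 g (some u) none) →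
      S = T ∨ I.flt g T S := by
  intro n
  induction n with
  | zero =>
    intro T S hT hsub _
    have hTe : T = ∅ := Finset.card_eq_zero.mp (Nat.le_zero.mp hT)
    left
    rw [hTe] at hsub ⊢
    exact Finset.subset_empty.mp hsub
  | succ n ih =>
    intro T S hT hsub hacc
    by_cases hST : S = T
    · exact Or.inl hST
    · obtain ⟨u, huT, huS⟩ := Finset.exists_of_ssubset (lt_of_le_of_ne hsub hST)
      have hsub' : S ⊆ T.erase u := fun x hx =>
        Finset.mem_erase.mpr ⟨fun e => huS (e ▸ hx), hsub hx⟩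
      have hcard : (T.erase u).card ≤ n := by
        rw [Finset.card_erase_of_mem huT]
        have : 1 ≤ T.card := Finset.card_pos.mpr ⟨u, huT⟩
        omega
      have hstep : I.flt g T (T.erase u) := by
        have hne : u ∉ T.erase u := Finset.notMem_erase u T
        have h2 := (I.resp_add g (T.erase u) u hne).2 (hacc u huT)
        rwa [Finset.insert_erase huT] at h2
      rcases ih (T.erase u) S hcard hsub' (fun v hv => hacc v (Finset.mem_of_mem_erase hv)) with h|h
      · right; rw [h]; exact hstep
      · right; exact I.flt_trans g T (T.erase u) S hstep h

/-- Any block implies the blocking worker is acceptable (given employed workers are). -/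
lemma blocks_acc {I : MTO F W} {μ : W → Option F} {w : W} {g : F}
    (hIR : ∀ u, μ u = some g → I.flt1 g (some u) none)
    (hb : I.blocks μ w g) : I.flt1 g (some w) none := by
  obtain ⟨h1, S, hS, _, hflt⟩ := hb
  have hwM : w ∉ matchedSet μ g := not_mem_matched_of_wlt h1
  have hwS : w ∉ S := fun h => hwM (hS h)
  have hch := chain_flt I g (matchedSet μ g).card (matchedSet μ g) S le_rfl hS
    (fun u hu => hIR u (mem_matchedSet.mp hu))
  rcases hch with h|h
  · rw [← h] at hflt
    exact (I.resp_add g S w hwS).1 hflt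
  · exact (I.resp_add g S w hwS).1 (I.flt_trans g _ _ _ hflt h)

/-- Transfer: a stable matching leaving `f` unsaturated remains stable after a
permutation of `f`'s preferences. -/
lemma transfer (I I' : MTO F W) (f : F)
    (hcap : I'.cap = I.cap) (hwlt : I'.wlt = I.wlt)
    (hother1 : ∀ g, g ≠ f → I'.flt1 g = I.flt1 g)
    (hother : ∀ g, g ≠ f → I'.flt g = I.flt g)
    (hacc : ∀ w, I.flt1 f (some w) none ↔ I'.flt1 f (some w) none)
    (μ : W → Option F) (hμ : I.isStable μ)
    (hunsat : (matchedSet μ f).card < I.cap f) : I'.isStable μ := by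
  obtain ⟨hm, ⟨hIRw, hIRf⟩, hnb⟩ := hμ
  have haccf : ∀ u, μ u = some f → I'.flt1 f (some u) none := fun u hu =>
    (hacc u).1 (acc_of_not_unacc I f u (hIRf u f hu))
  refine ⟨fun g => by rw [hcap]; exact hm g,
    ⟨fun w g hw => by rw [hwlt]; exact hIRw w g hw, ?_⟩, ?_⟩
  · intro w g hw
    by_cases hgf : g = f
    · subst hgf
      exact I'.flt1_asymm g (haccf w hw)
    · rw [hother1 g hgf]; exact hIRf w g hw
  · intro w g hb
    by_cases hgf : g = f
    · subst hgf
      have haccw : I'.flt1 g (some w) none := blocks_acc haccf hb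
      have haccwI : I.flt1 g (some w) none := (hacc w).2 haccw
      have h1 : I.wlt w (some g) (μ w) := by rw [← hwlt]; exact hb.1
      exact stable_no_open_block ⟨hm, ⟨hIRw, hIRf⟩, hnb⟩ h1 haccwI hunsat
    · apply hnb w g
      obtain ⟨h1, S, h2, h3, h4⟩ := hb
      rw [hwlt] at h1
      rw [hcap] at h3
      rw [hother g hgf] at h4
      exact ⟨h1, S, h2, h3, h4⟩

/-- If a worker strictly prefers its `ν`-match to its `μ`-match (both stable), then it is
matched in `ν` to a firm that is saturated in `μ` and prefers all its `μ`-workers to `w`. -/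
lemma pref_block {J : MTO F W} {μ ν : W → Option F} (hμ : J.isStable μ) (hν : J.isStable ν)
    {w : W} (h : J.wlt w (ν w) (μ w)) :
    ∃ g, ν w = some g ∧ (∀ u ∈ matchedSet μ g, J.flt1 g (some u) (some w)) ∧
      J.cap g ≤ (matchedSet μ g).card := by
  obtain ⟨g, hg⟩ : ∃ g, ν w = some g := by
    cases hν' : ν w with
    | none =>
      rw [hν'] at h
      cases hμ' : μ w with
      | none => rw [hμ'] at h; exact absurd h (J.wlt_irrefl w none)
      | some h0 => rw [hμ'] at h; exact absurd h (hμ.2.1.1 w h0 hμ')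
    | some g => exact ⟨g, rfl⟩
  have haccw : J.flt1 g (some w) none := stable_matched_acc hν hg
  have hpref : J.wlt w (some g) (μ w) := hg ▸ h
  have hsat : J.cap g ≤ (matchedSet μ g).card :=
    le_of_not_gt (fun hc => stable_no_open_block hμ hpref haccw hc)
  refine ⟨g, hg, ?_, hsat⟩
  intro u hu
  have hwM : w ∉ matchedSet μ g := not_mem_matched_of_wlt hpref
  have hne : (some u : Option W) ≠ some w := by
    intro e
    exact hwM ((Option.some.inj e) ▸ hu)
  rcases J.flt1_total g hne with h'|h'
  · exact h'
  · exact (stable_no_swap_block hμ hpref hu h').elim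

/-- The set of workers strictly preferring their `μ`-match to their `ν`-match. -/
noncomputable def Pref (J : MTO F W) (μ ν : W → Option F) : Finset W :=
  @Finset.filter _ (fun w => J.wlt w (μ w) (ν w)) (Classical.decPred _) Finset.univ

lemma mem_Pref {J : MTO F W} {μ ν : W → Option F} {w : W} :
    w ∈ Pref J μ ν ↔ J.wlt w (μ w) (ν w) := by
  simp [Pref]

noncomputable def Ag (J : MTO F W) (μ ν : W → Option F) (g : F) : Finset W :=
  (matchedSet ν g \ matchedSet μ g) ∩ Pref J μ ν

noncomputable def Bg (J : MTO F W) (μ ν : W → Option F) (g : F) : Finset W :=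
  (matchedSet μ g \ matchedSet ν g) ∩ Pref J μ ν

lemma dich {J : MTO F W} {μ ν : W → Option F} (hμ : J.isStable μ) (hν : J.isStable ν)
    {g : F} (hB : (Bg J μ ν g).Nonempty) :
    (matchedSet ν g \ matchedSet μ g) ⊆ Pref J μ ν ∧ J.cap g ≤ (matchedSet ν g).card := by
  obtain ⟨u, hu⟩ := hB
  rw [Bg, Finset.mem_inter, Finset.mem_sdiff, mem_matchedSet, mem_matchedSet, mem_Pref] at hu
  obtain ⟨⟨huμ, huν⟩, hup⟩ := hu
  obtain ⟨g', hg', hall, hsat⟩ := pref_block hν hμ hup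
  rw [huμ] at hg'
  cases Option.some.inj hg'
  constructor
  · intro w hw
    rw [Finset.mem_sdiff, mem_matchedSet, mem_matchedSet] at hw
    obtain ⟨hwν, hwμ⟩ := hw
    rw [mem_Pref, hwν]
    rcases J.wlt_trichot w (μ w) (some g) with e|h'|h'
    · exact absurd e hwμ
    · exact h'
    · exfalso
      have hwacc : J.flt1 g (some w) (some u) := hall w (mem_matchedSet.mpr hwν)
      exact stable_no_swap_block hμ h' (mem_matchedSet.mpr huμ) hwacc
  · exact hsat

lemma count_eq {J : MTO F W} {μ ν : W → Option F} (hμ : J.isStable μ) (hν : J.isStable ν) :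
    ∀ g, (Ag J μ ν g).card = (Bg J μ ν g).card := by
  classical
  set G : Finset F := Finset.univ.biUnion (fun w => (μ w).toFinset ∪ (ν w).toFinset) with hG
  have hμG : ∀ {w g}, μ w = some g → g ∈ G := by
    intro w g hw
    rw [hG, Finset.mem_biUnion]
    exact ⟨w, Finset.mem_univ w, by simp [hw]⟩
  have hνG : ∀ {w g}, ν w = some g → g ∈ G := by
    intro w g hw
    rw [hG, Finset.mem_biUnion]
    exact ⟨w, Finset.mem_univ w, by simp [hw]⟩
  have hAmem : ∀ {w g}, w ∈ Ag J μ ν g → ν w = some g ∧ w ∈ Pref J μ ν := by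
    intro w g hw
    rw [Ag, Finset.mem_inter, Finset.mem_sdiff, mem_matchedSet] at hw
    exact ⟨hw.1.1, hw.2⟩
  have hBmem : ∀ {w g}, w ∈ Bg J μ ν g → μ w = some g ∧ w ∈ Pref J μ ν := by
    intro w g hw
    rw [Bg, Finset.mem_inter, Finset.mem_sdiff, mem_matchedSet] at hw
    exact ⟨hw.1.1, hw.2⟩
  have hBdisj : ∀ x ∈ G, ∀ y ∈ G, x ≠ y → Disjoint (Bg J μ ν x) (Bg J μ ν y) := by
    intro x _ y _ hxy
    rw [Finset.disjoint_left]
    intro w hwx hwy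
    exact hxy (Option.some.inj ((hBmem hwx).1.symm.trans (hBmem hwy).1))
  have hAdisj : ∀ x ∈ G, ∀ y ∈ G, x ≠ y → Disjoint (Ag J μ ν x) (Ag J μ ν y) := by
    intro x _ y _ hxy
    rw [Finset.disjoint_left]
    intro w hwx hwy
    exact hxy (Option.some.inj ((hAmem hwx).1.symm.trans (hAmem hwy).1))
  have hBunion : G.biUnion (Bg J μ ν) = Pref J μ ν := by
    apply Finset.Subset.antisymm
    · intro w hw
      rw [Finset.mem_biUnion] at hw
      obtain ⟨g, _, hwg⟩ := hw
      exact (hBmem hwg).2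
    · intro w hw
      have hwlt := mem_Pref.mp hw
      obtain ⟨g, hg, _, _⟩ := pref_block hν hμ hwlt
      rw [Finset.mem_biUnion]
      refine ⟨g, hμG hg, ?_⟩
      rw [Bg, Finset.mem_inter, Finset.mem_sdiff, mem_matchedSet, mem_matchedSet]
      refine ⟨⟨hg, ?_⟩, hw⟩
      intro hνg
      rw [hg, hνg] at hwlt
      exact J.wlt_irrefl w (some g) hwlt
    
  have hAunion : G.biUnion (Ag J μ ν) ⊆ Pref J μ ν := by
    intro w hw
    rw [Finset.mem_biUnion] at hw
    obtain ⟨g, _, hwg⟩ := hw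
    exact (hAmem hwg).2
  have hBsum : ∑ g ∈ G, (Bg J μ ν g).card = (Pref J μ ν).card := by
    rw [← Finset.card_biUnion hBdisj, hBunion]
  have hAsum : ∑ g ∈ G, (Ag J μ ν g).card ≤ (Pref J μ ν).card := by
    rw [← Finset.card_biUnion hAdisj]
    exact Finset.card_le_card hAunion
  have hge : ∀ g ∈ G, (Bg J μ ν g).card ≤ (Ag J μ ν g).card := by
    intro g _
    by_cases hBg : (Bg J μ ν g).Nonempty
    · obtain ⟨hsub, hsat⟩ := dich hμ hν hBg
      have hAeq : Ag J μ ν g = matchedSet ν g \ matchedSet μ g :=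
        Finset.inter_eq_left.mpr hsub
      have h1 : (Bg J μ ν g).card ≤ (matchedSet μ g \ matchedSet ν g).card :=
        Finset.card_le_card (Finset.inter_subset_left)
      have h2 : (matchedSet μ g \ matchedSet ν g).card + (matchedSet μ g ∩ matchedSet ν g).card
          = (matchedSet μ g).card := Finset.card_sdiff_add_card_inter _ _
      have h3 : (matchedSet ν g \ matchedSet μ g).card + (matchedSet ν g ∩ matchedSet μ g).card
          = (matchedSet ν g).card := Finset.card_sdiff_add_card_inter _ _
      have h4 : matchedSet ν g ∩ matchedSet μ g = matchedSet μ g ∩ matchedSet ν g :=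
        Finset.inter_comm _ _
      have h5 : (matchedSet μ g).card ≤ J.cap g := hμ.1 g
      rw [hAeq]
      rw [h4] at h3
      omega
    · rw [Finset.not_nonempty_iff_eq_empty] at hBg
      simp [hBg]
  have hsums : ∑ g ∈ G, (Bg J μ ν g).card = ∑ g ∈ G, (Ag J μ ν g).card := by
    have h1 : ∑ g ∈ G, (Bg J μ ν g).card ≤ ∑ g ∈ G, (Ag J μ ν g).card :=
      Finset.sum_le_sum hge
    have h2 : ∑ g ∈ G, (Ag J μ ν g).card ≤ ∑ g ∈ G, (Bg J μ ν g).card := by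
      rw [hBsum]; exact hAsum
    omega
  have hpt := (Finset.sum_eq_sum_iff_of_le hge).mp hsums
  intro g
  by_cases hgG : g ∈ G
  · exact (hpt g hgG).symm
  · have hA0 : Ag J μ ν g = ∅ := by
      rw [Finset.eq_empty_iff_forall_notMem]
      intro w hw
      exact hgG (hνG (hAmem hw).1)
    have hB0 : Bg J μ ν g = ∅ := by
      rw [Finset.eq_empty_iff_forall_notMem]
      intro w hw
      exact hgG (hμG (hBmem hw).1)
    rw [hA0, hB0]

/-- Rural hospitals (unsaturated firm version): a firm unsaturated in one stable
matching is matched to the same set of workers in every stable matching. -/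
lemma rural_unsat {J : MTO F W} {μ ν : W → Option F} (hμ : J.isStable μ) (hν : J.isStable ν)
    {f : F} (hf : (matchedSet μ f).card < J.cap f) :
    matchedSet ν f = matchedSet μ f := by
  have hXnu : Bg J ν μ f = ∅ := by
    rw [Finset.eq_empty_iff_forall_notMem]
    intro w hw
    rw [Bg, Finset.mem_inter, mem_Pref] at hw
    obtain ⟨g, hg, _, hsat⟩ := pref_block hμ hν hw.2
    have : w ∈ matchedSet ν f := (Finset.mem_sdiff.mp hw.1).1
    rw [mem_matchedSet] at this
    rw [this] at hg
    cases Option.some.inj hg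
    omega
  have hYnu : Ag J ν μ f = ∅ := by
    have := count_eq hν hμ f
    rw [hXnu] at this
    simpa using Finset.card_eq_zero.mp (by simpa using this)
  have hBf : Bg J μ ν f = ∅ := by
    by_contra hne
    rw [← Ne, ← Finset.nonempty_iff_ne_empty] at hne
    obtain ⟨hsub, hsat⟩ := dich hμ hν hne
    have hAeq : Ag J μ ν f = matchedSet ν f \ matchedSet μ f :=
      Finset.inter_eq_left.mpr hsub
    have hc := count_eq hμ hν f
    rw [hAeq] at hc
    have h1 : (Bg J μ ν f).card ≤ (matchedSet μ f \ matchedSet ν f).card :=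
      Finset.card_le_card (Finset.inter_subset_left)
    have h2 : (matchedSet μ f \ matchedSet ν f).card + (matchedSet μ f ∩ matchedSet ν f).card
        = (matchedSet μ f).card := Finset.card_sdiff_add_card_inter _ _
    have h3 : (matchedSet ν f \ matchedSet μ f).card + (matchedSet μ f ∩ matchedSet ν f).card
        = (matchedSet ν f).card := by
      rw [Finset.inter_comm]
      exact Finset.card_sdiff_add_card_inter _ _
    omega
  have hAf : Ag J μ ν f = ∅ := by
    have := count_eq hμ hν f
    rw [hBf] at this
    simpa using Finset.card_eq_zero.mp (by simpa using this)
  have h1 : matchedSet ν f \ matchedSet μ f = ∅ := by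
    rw [Finset.eq_empty_iff_forall_notMem]
    intro w hw
    have hw' := Finset.mem_sdiff.mp hw
    rw [mem_matchedSet] at hw'
    rcases J.wlt_trichot w (μ w) (ν w) with e|h'|h'
    · rw [mem_matchedSet] at hw'
      exact hw'.2 (e.trans hw'.1)
    · have : w ∈ Ag J μ ν f := Finset.mem_inter.mpr ⟨hw, mem_Pref.mpr h'⟩
      rw [hAf] at this
      exact absurd this (Finset.notMem_empty w)
    · have : w ∈ Bg J ν μ f := Finset.mem_inter.mpr ⟨hw, mem_Pref.mpr h'⟩
      rw [hXnu] at this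
      exact absurd this (Finset.notMem_empty w)
  have h2 : matchedSet μ f \ matchedSet ν f = ∅ := by
    rw [Finset.eq_empty_iff_forall_notMem]
    intro w hw
    have hw' := Finset.mem_sdiff.mp hw
    rw [mem_matchedSet] at hw'
    rcases J.wlt_trichot w (μ w) (ν w) with e|h'|h'
    · rw [mem_matchedSet] at hw'
      exact hw'.2 (e.symm ▸ hw'.1)
    · have : w ∈ Bg J μ ν f := Finset.mem_inter.mpr ⟨hw, mem_Pref.mpr h'⟩
      rw [hBf] at this
      exact absurd this (Finset.notMem_empty w)
    · have : w ∈ Ag J ν μ f := Finset.mem_inter.mpr ⟨hw, mem_Pref.mpr h'⟩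
      rw [hYnu] at this
      exact absurd this (Finset.notMem_empty w)
  rw [Finset.sdiff_eq_empty_iff_subset] at h1 h2
  exact Finset.Subset.antisymm h1 h2

lemma withCap_self (I : MTO F W) (f : F) : I.withCap f (I.cap f) = I := by
  simp [MTO.withCap]

lemma card_le_peak (I : MTO F W) (f : F) (μ : W → Option F) (h : I.isStable μ) :
    (matchedSet μ f).card ≤ I.peak f := by
  apply le_csSup
  · refine ⟨Fintype.card W, ?_⟩
    rintro n ⟨b, μ0, _, rfl⟩
    exact (Finset.card_filter_le _ _).trans (le_of_eq (Finset.card_univ))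
  · exact ⟨I.cap f, μ, by rw [withCap_self]; exact h, rfl⟩

end Auxiliary

/-- Above peak, preference manipulation (permuting the acceptable workers) is
useless under any stable matching algorithm: the firm is matched to the same
set of workers in every stable matching of the manipulated instance as in every
stable matching of the true instance. -/
theorem above_peak_preference_manipulation_useless
    {F W : Type} [DecidableEq W] [DecidableEq F] [Fintype W]
    (I I' : MTO F W) (f : F)
    (hcap : I'.cap = I.cap)
    (hwlt : I'.wlt = I.wlt)
    (hother1 : ∀ g, g ≠ f → I'.flt1 g = I.flt1 g)
    (hother : ∀ g, g ≠ f → I'.flt g = I.flt g)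
    (hacc : ∀ w, I.flt1 f (some w) none ↔ I'.flt1 f (some w) none)
    (hpeak : I.peak f < I.cap f)
    (μ μ' : W → Option F) (hμ : I.isStable μ) (hμ' : I'.isStable μ') :
    matchedSet μ' f = matchedSet μ f := by
  have hpk := card_le_peak I f μ hμ
  have hunsat : (matchedSet μ f).card < I.cap f := lt_of_le_of_lt hpk hpeak
  have hμI' : I'.isStable μ := transfer I I' f hcap hwlt hother1 hother hacc μ hμ hunsat
  have hunsat' : (matchedSet μ f).card < I'.cap f := by rw [hcap]; exact hunsat
  exact rural_unsat hμI' hμ' hunsat'
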